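/- Let κ ∈ ℝ and a < c < b be reals with (b−a)·√(max(κ,0)) < π. Let u : (a,b) → ℝ be continuous and suppose u satisfies the κ-concavity inequality on the subinterval (a,c] and also on the subinterval [c,b). Suppose further that u has a left derivative m⁻ at c (i.e. (u(c) − u(c−h))/h → m⁻ as h ↓ 0) and a right derivative m⁺ at c (i.e. (u(c+h) − u(c))/h → m⁺ as h ↓ 0). Then u satisfies the κ-concavity inequality on all of (a,b) if and only if m⁻ ≥ m⁺. -/

import Mathlib

/-!
On an interval of length less than `π / √κ`, the κ-concavity inequality says that `u` lies above
each of its κ-chords, the solutions of `v'' + κ v = 0` that agree with `u` at two points.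
If `u` is κ-concave across `c`, the chord over `[c - h, c + h]` gives
`u (c - h) + u (c + h) ≤ 2 cos_κ h · u c`; since `cos_κ` is flat at `0`, dividing by `h` and
letting `h → 0` gives `m⁺ - m⁻ ≤ 0`. Conversely, `u` lies above the chords over `[x, c]` and
`[c, y]`, so `m⁻` is at most the slope at `c` of the first and `m⁺` at least that of the second.
When `m⁺ ≤ m⁻`, this forces `u c` above the chord over `[x, y]`. By Ptolemy's identity for
`sin_κ`, that chord coincides on `[x, c]` and on `[c, y]` with the chords through its own value
at `c`, which lie below the chords of `u` there and hence below `u`.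
-/

open Real Set Filter

/-- The generalized sine function `sin_κ`. -/
noncomputable def sinK (κ x : ℝ) : ℝ :=
  if κ < 0 then Real.sinh (Real.sqrt (-κ) * x) / Real.sqrt (-κ)
  else if κ = 0 then x
  else Real.sin (Real.sqrt κ * x) / Real.sqrt κ

/-- `u` satisfies the κ-concavity inequality (`u'' + κ u ≤ 0`) on the set `s`. -/
def KConcIneqOn (κ : ℝ) (u : ℝ → ℝ) (s : Set ℝ) : Prop :=
  ∀ x ∈ s, ∀ y ∈ s, 0 < y - x → (0 < κ → (y - x) * Real.sqrt κ < Real.pi) →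
    ∀ t ∈ Set.Icc (0:ℝ) 1,
      u ((1 - t) * x + t * y) ≥
        (sinK κ ((1 - t) * (y - x)) / sinK κ (y - x)) * u x +
        (sinK κ (t * (y - x)) / sinK κ (y - x)) * u y

open Topology

noncomputable def cosK (κ x : ℝ) : ℝ :=
  if κ < 0 then cosh (√(-κ) * x)
  else if κ = 0 then 1
  else cos (√κ * x)

section SinK

variable {κ : ℝ}

@[simp]
lemma sinK_zero (κ : ℝ) : sinK κ 0 = 0 := by
  unfold sinK; split_ifs <;> simp

@[simp]
lemma cosK_zero (κ : ℝ) : cosK κ 0 = 1 := by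
  unfold cosK; split_ifs <;> simp

lemma mul_sqrt_lt_pi_of_le {d L : ℝ} (hL : 0 < κ → L * √κ < π) (hd : d ≤ L) :
    0 < κ → d * √κ < π :=
  fun hκ => (mul_le_mul_of_nonneg_right hd (sqrt_nonneg κ)).trans_lt (hL hκ)

lemma sinK_pos {x : ℝ} (hx : 0 < x) (hπ : 0 < κ → x * √κ < π) : 0 < sinK κ x := by
  unfold sinK
  split_ifs with hneg hzero
  · have hs : 0 < √(-κ) := sqrt_pos.2 (neg_pos.2 hneg)
    exact div_pos (sinh_pos_iff.2 (mul_pos hs hx)) hs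
  · exact hx
  · have hκ : 0 < κ := lt_of_le_of_ne (not_lt.1 hneg) (Ne.symm hzero)
    have hs : 0 < √κ := sqrt_pos.2 hκ
    exact div_pos (sin_pos_of_pos_of_lt_pi (mul_pos hs hx) (by linarith [hπ hκ])) hs

lemma sinK_nonneg {x : ℝ} (hx : 0 ≤ x) (hπ : 0 < κ → x * √κ < π) : 0 ≤ sinK κ x := by
  rcases hx.eq_or_lt with rfl | hx
  · rw [sinK_zero]
  · exact (sinK_pos hx hπ).le

lemma sinK_add (κ x y : ℝ) : sinK κ (x + y) = sinK κ x * cosK κ y + cosK κ x * sinK κ y := by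
  unfold sinK cosK
  split_ifs
  · simp only [mul_add, sinh_add]; ring
  · ring
  · simp only [mul_add, sin_add]; ring

lemma sinK_sub_mul_sinK_sub (κ a b c d : ℝ) :
    sinK κ (c - a) * sinK κ (d - b) =
      sinK κ (c - b) * sinK κ (d - a) + sinK κ (b - a) * sinK κ (d - c) := by
  unfold sinK
  split_ifs
  · simp only [mul_sub, sinh_sub]; ring
  · ring
  · simp only [mul_sub, sin_sub]; ring

lemma hasDerivAt_sinK (κ x : ℝ) : HasDerivAt (sinK κ) (cosK κ x) x := by
  unfold sinK cosK
  split_ifs with hneg hzero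
  · have hs : √(-κ) ≠ 0 := (sqrt_pos.2 (neg_pos.2 hneg)).ne'
    exact (((hasDerivAt_id' x).const_mul √(-κ)).sinh.div_const √(-κ)).congr_deriv
      (by field_simp)
  · exact hasDerivAt_id x
  · have hs : √κ ≠ 0 := (sqrt_pos.2 (lt_of_le_of_ne (not_lt.1 hneg) (Ne.symm hzero))).ne'
    exact (((hasDerivAt_id' x).const_mul √κ).sin.div_const √κ).congr_deriv (by field_simp)

lemma hasDerivAt_cosK (κ x : ℝ) : HasDerivAt (cosK κ) (-κ * sinK κ x) x := by
  unfold sinK cosK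
  split_ifs with hneg hzero
  · have hs : 0 < √(-κ) := sqrt_pos.2 (neg_pos.2 hneg)
    convert ((hasDerivAt_id' x).const_mul √(-κ)).cosh using 1
    field_simp
    rw [sq_sqrt (neg_nonneg.2 hneg.le)]
    ring
  · simpa [hzero] using hasDerivAt_const x (1 : ℝ)
  · have hκ : 0 < κ := lt_of_le_of_ne (not_lt.1 hneg) (Ne.symm hzero)
    have hs : 0 < √κ := sqrt_pos.2 hκ
    convert ((hasDerivAt_id' x).const_mul √κ).cos using 1
    field_simp
    rw [sq_sqrt hκ.le]

end SinK

section DiffQuot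

variable {f g : ℝ → ℝ} {c g' m : ℝ}

lemma HasDerivAt.tendsto_forward_diffQuot (hg : HasDerivAt g g' c) :
    Tendsto (fun h => (g (c + h) - g c) / h) (𝓝[>] 0) (𝓝 g') :=
  hg.tendsto_slope_zero_right.congr fun h => by rw [smul_eq_mul, inv_mul_eq_div]

lemma HasDerivAt.tendsto_backward_diffQuot (hg : HasDerivAt g g' c) :
    Tendsto (fun h => (g c - g (c - h)) / h) (𝓝[>] 0) (𝓝 g') := by
  have := hg.tendsto_slope_zero_left.comp (tendsto_neg_nhdsGT_neg (a := (0 : ℝ)))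
  rw [neg_zero] at this
  refine this.congr fun h => ?_
  simp only [Function.comp_apply, smul_eq_mul, ← sub_eq_add_neg]
  rw [inv_neg, neg_mul, ← mul_neg, neg_sub, inv_mul_eq_div]

lemma le_of_tendsto_backward_diffQuot (hg : HasDerivAt g g' c) (hc : f c ≤ g c)
    (hfg : ∀ᶠ h in 𝓝[>] 0, g (c - h) ≤ f (c - h))
    (hf : Tendsto (fun h => (f c - f (c - h)) / h) (𝓝[>] 0) (𝓝 m)) : m ≤ g' := by
  refine le_of_tendsto_of_tendsto hf hg.tendsto_backward_diffQuot ?_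
  filter_upwards [hfg, self_mem_nhdsWithin] with h hh (hpos : 0 < h)
  exact div_le_div_of_nonneg_right (by linarith) hpos.le

lemma ge_of_tendsto_forward_diffQuot (hg : HasDerivAt g g' c) (hc : f c ≤ g c)
    (hfg : ∀ᶠ h in 𝓝[>] 0, g (c + h) ≤ f (c + h))
    (hf : Tendsto (fun h => (f (c + h) - f c) / h) (𝓝[>] 0) (𝓝 m)) : g' ≤ m := by
  refine le_of_tendsto_of_tendsto hg.tendsto_forward_diffQuot hf ?_
  filter_upwards [hfg, self_mem_nhdsWithin] with h hh (hpos : 0 < h)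
  exact div_le_div_of_nonneg_right (by linarith) hpos.le

end DiffQuot

/-- The solution of `v'' + κ v = 0` with `v x = p` and `v y = q`. -/
noncomputable def kChord (κ x y p q z : ℝ) : ℝ :=
  (p * sinK κ (y - z) + q * sinK κ (z - x)) / sinK κ (y - x)

section KChord

variable {κ x y p q : ℝ}

lemma kChord_left (h : sinK κ (y - x) ≠ 0) : kChord κ x y p q x = p := by
  simp [kChord, h]

lemma kChord_right (h : sinK κ (y - x) ≠ 0) : kChord κ x y p q y = q := by
  simp [kChord, h]

lemma kChord_lineMap (κ x y p q t : ℝ) :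
    kChord κ x y p q ((1 - t) * x + t * y) =
      sinK κ ((1 - t) * (y - x)) / sinK κ (y - x) * p +
        sinK κ (t * (y - x)) / sinK κ (y - x) * q := by
  rw [kChord, show y - ((1 - t) * x + t * y) = (1 - t) * (y - x) by ring,
    show (1 - t) * x + t * y - x = t * (y - x) by ring]
  ring

lemma hasDerivAt_kChord (κ x y p q z : ℝ) :
    HasDerivAt (kChord κ x y p q)
      ((q * cosK κ (z - x) - p * cosK κ (y - z)) / sinK κ (y - x)) z := by
  have hl := (hasDerivAt_sinK κ (y - z)).comp z ((hasDerivAt_id' z).const_sub y)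
  have hr := (hasDerivAt_sinK κ (z - x)).comp z ((hasDerivAt_id' z).sub_const x)
  exact ((hl.const_mul p).add (hr.const_mul q)).div_const _ |>.congr_deriv (by ring)

lemma kChord_mono {p' q' z : ℝ} (hp : p ≤ p') (hq : q ≤ q') (hyz : 0 ≤ sinK κ (y - z))
    (hzx : 0 ≤ sinK κ (z - x)) (hyx : 0 < sinK κ (y - x)) :
    kChord κ x y p q z ≤ kChord κ x y p' q' z := by
  unfold kChord; gcongr

lemma kChord_kChord_left {c : ℝ} (hcx : sinK κ (c - x) ≠ 0) (hyx : sinK κ (y - x) ≠ 0) (w : ℝ) :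
    kChord κ x c p (kChord κ x y p q c) w = kChord κ x y p q w := by
  unfold kChord
  field_simp
  linear_combination (-p) * sinK_sub_mul_sinK_sub κ x w c y

lemma kChord_kChord_right {c : ℝ} (hyc : sinK κ (y - c) ≠ 0) (hyx : sinK κ (y - x) ≠ 0) (w : ℝ) :
    kChord κ c y (kChord κ x y p q c) q w = kChord κ x y p q w := by
  unfold kChord
  field_simp
  linear_combination (-q) * sinK_sub_mul_sinK_sub κ x c w y

lemma kChord_le_of_slope_le {c r : ℝ} (hcx : 0 < sinK κ (c - x))
    (hyc : 0 < sinK κ (y - c)) (hyx : 0 < sinK κ (y - x))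
    (h : (q - r * cosK κ (y - c)) / sinK κ (y - c) ≤ (r * cosK κ (c - x) - p) / sinK κ (c - x)) :
    kChord κ x y p q c ≤ r := by
  rw [div_le_div_iff₀ hyc hcx] at h
  rw [kChord, div_le_iff₀ hyx, show y - x = (c - x) + (y - c) by ring, sinK_add]
  linear_combination h

end KChord

section KConcIneqOn

variable {κ : ℝ} {u : ℝ → ℝ}

lemma kConcIneqOn_iff_kChord_le {s : Set ℝ} :
    KConcIneqOn κ u s ↔ ∀ x ∈ s, ∀ y ∈ s, x < y → (0 < κ → (y - x) * √κ < π) →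
      ∀ w ∈ Icc x y, kChord κ x y (u x) (u y) w ≤ u w := by
  constructor
  · intro H x hx y hy hxy hπ w hw
    have hyx : 0 < y - x := sub_pos.2 hxy
    have ht : (w - x) / (y - x) ∈ Icc (0 : ℝ) 1 :=
      ⟨div_nonneg (by linarith [hw.1]) hyx.le, (div_le_one hyx).2 (by linarith [hw.2])⟩
    have hw' : (1 - (w - x) / (y - x)) * x + (w - x) / (y - x) * y = w := by
      field_simp; ring
    simpa only [← kChord_lineMap, hw'] using H x hx y hy hyx hπ _ ht
  · intro H x hx y hy hyx hπ t ht
    rw [← kChord_lineMap]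
    refine H x hx y hy (sub_pos.1 hyx) hπ _ ⟨?_, ?_⟩ <;> nlinarith [ht.1, ht.2]

lemma kChord_le_of_split {x c y : ℝ} (hxc : x < c) (hcy : c < y)
    (hπ : 0 < κ → (y - x) * √κ < π)
    (hl : ∀ w ∈ Icc x c, kChord κ x c (u x) (u c) w ≤ u w)
    (hr : ∀ w ∈ Icc c y, kChord κ c y (u c) (u y) w ≤ u w)
    (hc : kChord κ x y (u x) (u y) c ≤ u c) :
    ∀ w ∈ Icc x y, kChord κ x y (u x) (u y) w ≤ u w := by
  have hS : ∀ {d}, 0 ≤ d → d ≤ y - x → 0 ≤ sinK κ d := fun h0 h1 =>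
    sinK_nonneg h0 (mul_sqrt_lt_pi_of_le hπ h1)
  have hSpos : ∀ {d}, 0 < d → d ≤ y - x → 0 < sinK κ d := fun h0 h1 =>
    sinK_pos h0 (mul_sqrt_lt_pi_of_le hπ h1)
  have hSyx : 0 < sinK κ (y - x) := hSpos (by linarith) le_rfl
  rintro w ⟨hxw, hwy⟩
  rcases le_total w c with hwc | hcw
  · have hScx : 0 < sinK κ (c - x) := hSpos (by linarith) (by linarith)
    calc kChord κ x y (u x) (u y) w
        = kChord κ x c (u x) (kChord κ x y (u x) (u y) c) w :=
          (kChord_kChord_left hScx.ne' hSyx.ne' w).symm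
      _ ≤ kChord κ x c (u x) (u c) w :=
          kChord_mono le_rfl hc (hS (by linarith) (by linarith)) (hS (by linarith) (by linarith))
            hScx
      _ ≤ u w := hl w ⟨hxw, hwc⟩
  · have hSyc : 0 < sinK κ (y - c) := hSpos (by linarith) (by linarith)
    calc kChord κ x y (u x) (u y) w
        = kChord κ c y (kChord κ x y (u x) (u y) c) (u y) w :=
          (kChord_kChord_right hSyc.ne' hSyx.ne' w).symm
      _ ≤ kChord κ c y (u c) (u y) w :=
          kChord_mono hc le_rfl (hS (by linarith) (by linarith)) (hS (by linarith) (by linarith))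
            hSyc
      _ ≤ u w := hr w ⟨hcw, hwy⟩

end KConcIneqOn

section Glue

variable {κ c mMinus mPlus : ℝ} {u : ℝ → ℝ}

lemma kChord_le_of_tendsto_diffQuot {x y : ℝ} (hxc : x < c) (hcy : c < y)
    (hπ : 0 < κ → (y - x) * √κ < π)
    (hl : ∀ w ∈ Icc x c, kChord κ x c (u x) (u c) w ≤ u w)
    (hr : ∀ w ∈ Icc c y, kChord κ c y (u c) (u y) w ≤ u w)
    (hMinus : Tendsto (fun h => (u c - u (c - h)) / h) (𝓝[>] 0) (𝓝 mMinus))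
    (hPlus : Tendsto (fun h => (u (c + h) - u c) / h) (𝓝[>] 0) (𝓝 mPlus))
    (hm : mPlus ≤ mMinus) :
    kChord κ x y (u x) (u y) c ≤ u c := by
  have hScx : 0 < sinK κ (c - x) := sinK_pos (by linarith) (mul_sqrt_lt_pi_of_le hπ (by linarith))
  have hSyc : 0 < sinK κ (y - c) := sinK_pos (by linarith) (mul_sqrt_lt_pi_of_le hπ (by linarith))
  have hSyx : 0 < sinK κ (y - x) := sinK_pos (by linarith) hπ
  have hleft : mMinus ≤ (u c * cosK κ (c - x) - u x) / sinK κ (c - x) := by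
    have hd := hasDerivAt_kChord κ x c (u x) (u c) c
    rw [sub_self, cosK_zero, mul_one] at hd
    refine le_of_tendsto_backward_diffQuot hd (kChord_right hScx.ne').ge ?_ hMinus
    filter_upwards [Ioo_mem_nhdsGT (sub_pos.2 hxc)] with h ⟨h0, hh⟩
    exact hl _ ⟨by linarith, by linarith⟩
  have hright : (u y - u c * cosK κ (y - c)) / sinK κ (y - c) ≤ mPlus := by
    have hd := hasDerivAt_kChord κ c y (u c) (u y) c
    rw [sub_self, cosK_zero, mul_one] at hd
    refine ge_of_tendsto_forward_diffQuot hd (kChord_left hSyc.ne').ge ?_ hPlus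
    filter_upwards [Ioo_mem_nhdsGT (sub_pos.2 hcy)] with h ⟨h0, hh⟩
    exact hr _ ⟨by linarith, by linarith⟩
  exact kChord_le_of_slope_le hScx hSyc hSyx (hright.trans (hm.trans hleft))

lemma add_le_two_mul_cosK_mul {h p q r : ℝ} (hh : 0 < sinK κ h) (h2h : 0 < sinK κ (2 * h))
    (hk : kChord κ (c - h) (c + h) p q c ≤ r) : p + q ≤ 2 * cosK κ h * r := by
  rw [kChord, show c + h - c = h by ring, show c - (c - h) = h by ring,
    show c + h - (c - h) = 2 * h by ring, div_le_iff₀ h2h, two_mul, sinK_add] at hk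
  refine le_of_mul_le_mul_left ?_ hh
  linear_combination hk

lemma le_of_add_le_two_mul_cosK_mul
    (hMinus : Tendsto (fun h => (u c - u (c - h)) / h) (𝓝[>] 0) (𝓝 mMinus))
    (hPlus : Tendsto (fun h => (u (c + h) - u c) / h) (𝓝[>] 0) (𝓝 mPlus))
    (hu : ∀ᶠ h in 𝓝[>] 0, u (c - h) + u (c + h) ≤ 2 * cosK κ h * u c) :
    mPlus ≤ mMinus := by
  have hcos : Tendsto (fun h => 2 * u c * ((cosK κ (0 + h) - cosK κ 0) / h)) (𝓝[>] 0)
      (𝓝 (2 * u c * (-κ * sinK κ 0))) :=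
    (hasDerivAt_cosK κ 0).tendsto_forward_diffQuot.const_mul _
  rw [sinK_zero, mul_zero, mul_zero] at hcos
  have := le_of_tendsto_of_tendsto (hPlus.sub hMinus) hcos ?_
  · linarith
  filter_upwards [hu, self_mem_nhdsWithin] with h hh (hpos : 0 < h)
  rw [zero_add, cosK_zero, div_sub_div_same, mul_div_assoc', mul_sub, mul_one]
  exact div_le_div_of_nonneg_right (by linarith) hpos.le

end Glue

theorem kConcIneq_glue_iff_general (κ a b c : ℝ) (hac : a < c) (hcb : c < b)
    (hπ : (b - a) * Real.sqrt (max κ 0) < Real.pi)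
    (u : ℝ → ℝ)
    (hleft : KConcIneqOn κ u (Set.Ioc a c))
    (hright : KConcIneqOn κ u (Set.Ico c b))
    (mMinus mPlus : ℝ)
    (hMinus : Tendsto (fun h : ℝ => (u c - u (c - h)) / h)
      (nhdsWithin 0 (Set.Ioi 0)) (nhds mMinus))
    (hPlus : Tendsto (fun h : ℝ => (u (c + h) - u c) / h)
      (nhdsWithin 0 (Set.Ioi 0)) (nhds mPlus)) :
    KConcIneqOn κ u (Set.Ioo a b) ↔ mPlus ≤ mMinus := by
  rw [kConcIneqOn_iff_kChord_le] at hleft hright ⊢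
  constructor
  · intro H
    have hπ' : 0 < κ → (b - a) * √κ < π := fun hκ => by rwa [max_eq_left hκ.le] at hπ
    refine le_of_add_le_two_mul_cosK_mul (κ := κ) hMinus hPlus ?_
    filter_upwards [Ioo_mem_nhdsGT (lt_min (sub_pos.2 hac) (sub_pos.2 hcb))] with h ⟨h0, hh⟩
    have hha := hh.trans_le (min_le_left _ _)
    have hhb := hh.trans_le (min_le_right _ _)
    have hπh := mul_sqrt_lt_pi_of_le hπ' (show c + h - (c - h) ≤ b - a by linarith)
    have hk := H (c - h) ⟨by linarith, by linarith⟩ (c + h) ⟨by linarith, by linarith⟩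
      (by linarith) hπh c ⟨by linarith, by linarith⟩
    exact add_le_two_mul_cosK_mul (sinK_pos h0 (mul_sqrt_lt_pi_of_le hπh (by linarith)))
      (sinK_pos (by linarith) (mul_sqrt_lt_pi_of_le hπh (by linarith))) hk
  · intro hm x hx y hy hxy hπxy
    rcases le_or_gt y c with hyc | hcy
    · exact hleft x ⟨hx.1, hxy.le.trans hyc⟩ y ⟨hx.1.trans hxy, hyc⟩ hxy hπxy
    rcases le_or_gt c x with hcx | hxc
    · exact hright x ⟨hcx, hx.2⟩ y ⟨hcx.trans hxy.le, hy.2⟩ hxy hπxy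
    have hl := hleft x ⟨hx.1, hxc.le⟩ c ⟨hac, le_rfl⟩ hxc
      (mul_sqrt_lt_pi_of_le hπxy (by linarith))
    have hr := hright c ⟨le_rfl, hcb⟩ y ⟨hcy.le, hy.2⟩ hcy
      (mul_sqrt_lt_pi_of_le hπxy (by linarith))
    exact kChord_le_of_split hxc hcy hπxy hl hr
      (kChord_le_of_tendsto_diffQuot hxc hcy hπxy hl hr hMinus hPlus hm)

/-- Gluing criterion: a continuous function which is κ-concave on `(a,c]` and on
`[c,b)` is κ-concave on `(a,b)` if and only if its left derivative at `c` is at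
least its right derivative at `c`. -/
theorem kConcIneq_glue_iff (κ a b c : ℝ) (hac : a < c) (hcb : c < b)
    (hπ : (b - a) * Real.sqrt (max κ 0) < Real.pi)
    (u : ℝ → ℝ) (hcont : ContinuousOn u (Set.Ioo a b))
    (hleft : KConcIneqOn κ u (Set.Ioc a c))
    (hright : KConcIneqOn κ u (Set.Ico c b))
    (mMinus mPlus : ℝ)
    (hMinus : Tendsto (fun h : ℝ => (u c - u (c - h)) / h)
      (nhdsWithin 0 (Set.Ioi 0)) (nhds mMinus))
    (hPlus : Tendsto (fun h : ℝ => (u (c + h) - u c) / h)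
      (nhdsWithin 0 (Set.Ioi 0)) (nhds mPlus)) :
    KConcIneqOn κ u (Set.Ioo a b) ↔ mPlus ≤ mMinus :=
  kConcIneq_glue_iff_general κ a b c hac hcb hπ u hleft hright mMinus mPlus hMinus hPlus
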